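/- There exists a constant L > 0, depending only on w, such that for all f, h ∈ H_w with lim_{x→∞} f(x) = 0 and lim_{x→∞} h(x) = 0 one has ‖F(f) − F(h)‖_w ≤ L · (‖f‖_w + ‖h‖_w) · ‖f − h‖_w. -/

import Mathlib

open MeasureTheory Set Filter

/-- Hypotheses on the weight function `w`. -/
def GoodWeight (w : ℝ → ℝ) : Prop :=
  (∀ x, 0 ≤ x → 1 ≤ w x) ∧ MonotoneOn w (Set.Ici 0) ∧ ContDiffOn ℝ 1 w (Set.Ici 0) ∧
    MeasureTheory.IntegrableOn (fun x => (w x) ^ (-(1/3) : ℝ)) (Set.Ici 0)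

/-- `h` belongs to `H_w` with weak derivative `h'`. -/
def IsHw (w h h' : ℝ → ℝ) : Prop :=
  Measurable h' ∧
  MeasureTheory.IntegrableOn (fun x => (h' x) ^ 2 * w x) (Set.Ici 0) ∧
  ∀ x, 0 ≤ x → h x = h 0 + ∫ y in (0:ℝ)..x, h' y

/-- The `H_w` norm of `h` (with weak derivative `h'`). -/
noncomputable def normW (w h h' : ℝ → ℝ) : ℝ :=
  Real.sqrt ((h 0) ^ 2 + ∫ x in Set.Ici (0:ℝ), (h' x) ^ 2 * w x)

/-- The HJM drift-type nonlinearity `F(h)(x) = h(x)·∫₀ˣ h(y) dy`. -/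
noncomputable def Fop (h : ℝ → ℝ) : ℝ → ℝ := fun x => h x * ∫ y in (0:ℝ)..x, h y


lemma myCS {μ : Measure ℝ} (f g : ℝ → ℝ) (hfm : AEStronglyMeasurable f μ)
    (hgm : AEStronglyMeasurable g μ) (hf0 : 0 ≤ᵐ[μ] f) (hg0 : 0 ≤ᵐ[μ] g)
    (hf2 : Integrable (fun x => f x ^ 2) μ) (hg2 : Integrable (fun x => g x ^ 2) μ) :
    ∫ x, f x * g x ∂μ ≤ Real.sqrt (∫ x, f x ^ 2 ∂μ) * Real.sqrt (∫ x, g x ^ 2 ∂μ) := by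
  have hpq : Real.HolderConjugate 2 2 := by constructor <;> norm_num
  have hmf : MemLp f (ENNReal.ofReal 2) μ := by
    rw [show ENNReal.ofReal 2 = 2 by simp]
    exact (memLp_two_iff_integrable_sq hfm).mpr hf2
  have hmg : MemLp g (ENNReal.ofReal 2) μ := by
    rw [show ENNReal.ofReal 2 = 2 by simp]
    exact (memLp_two_iff_integrable_sq hgm).mpr hg2
  have h := integral_mul_le_Lp_mul_Lq_of_nonneg hpq hf0 hg0 hmf hmg
  have e1 : ∀ h : ℝ → ℝ, (∫ x, h x ^ (2:ℝ) ∂μ) = ∫ x, h x ^ (2:ℕ) ∂μ := by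
    intro h; congr 1; ext x; rw [← Real.rpow_natCast (h x) 2]; norm_num
  have hI2 : (0:ℝ) ≤ ∫ x, f x ^ 2 ∂μ := integral_nonneg (fun x => sq_nonneg _)
  have hI3 : (0:ℝ) ≤ ∫ x, g x ^ 2 ∂μ := integral_nonneg (fun x => sq_nonneg _)
  rw [e1 f, e1 g] at h
  calc ∫ x, f x * g x ∂μ ≤ (∫ x, f x ^ 2 ∂μ) ^ ((1:ℝ)/2) * (∫ x, g x ^ 2 ∂μ) ^ ((1:ℝ)/2) := by
        simpa using h
    _ = _ := by
        rw [Real.sqrt_eq_rpow, Real.sqrt_eq_rpow]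


lemma prim_bound {p : ℝ → ℝ} (hp : Integrable p) (z : ℝ) :
    |∫ y in (0:ℝ)..z, p y| ≤ ∫ y, |p y| := by
  have key : ∀ a b : ℝ, |∫ y in Ioc a b, p y| ≤ ∫ y, |p y| := by
    intro a b
    calc |∫ y in Ioc a b, p y| ≤ ∫ y in Ioc a b, |p y| := by
          simpa using norm_integral_le_integral_norm (μ := volume.restrict (Ioc a b)) p
      _ ≤ ∫ y, |p y| := setIntegral_le_integral hp.abs
          (Eventually.of_forall fun y => abs_nonneg _)
  rcases le_total 0 z with hz | hz
  · rw [intervalIntegral.integral_of_le hz]; exact key 0 z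
  · rw [intervalIntegral.integral_of_ge hz, abs_neg]; exact key z 0

lemma parts {p q : ℝ → ℝ} (hp : Integrable p) (hq : Integrable q) (c : ℝ) {x : ℝ} (hx : 0 ≤ x) :
    ∫ y in (0:ℝ)..x, (p y * (∫ z in (0:ℝ)..y, q z) + (c + ∫ z in (0:ℝ)..y, p z) * q y)
      = (c + ∫ z in (0:ℝ)..x, p z) * ∫ z in (0:ℝ)..x, q z := by
  set P : ℝ → ℝ := fun y => ∫ z in (0:ℝ)..y, p z with hPdef
  set V : ℝ → ℝ := fun y => ∫ z in (0:ℝ)..y, q z with hVdef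
  have hPc : Continuous P := hp.continuous_primitive 0
  have hVc : Continuous V := hq.continuous_primitive 0
  have hPb : ∀ z, ‖P z‖ ≤ ∫ y, |p y| := fun z => prim_bound hp z
  have hVb : ∀ z, ‖V z‖ ≤ ∫ y, |q y| := fun z => prim_bound hq z
  have hpI : IntegrableOn p (Ioc 0 x) := hp.integrableOn
  have hqI : IntegrableOn q (Ioc 0 x) := hq.integrableOn
  have hpV : IntegrableOn (fun y => p y * V y) (Ioc 0 x) := by
    have := hpI.bdd_mul (hVc.aestronglyMeasurable.restrict) (Eventually.of_forall hVb)
    exact this.congr (Eventually.of_forall fun y => mul_comm _ _)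
  have hqP : IntegrableOn (fun y => q y * P y) (Ioc 0 x) := by
    have := hqI.bdd_mul (hPc.aestronglyMeasurable.restrict) (Eventually.of_forall hPb)
    exact this.congr (Eventually.of_forall fun y => mul_comm _ _)
  set T : ℝ → ℝ → ℝ := fun y z => if z ≤ y then p y * q z else 0 with hTdef
  set μ0 := volume.restrict (Ioc (0:ℝ) x) with hμ0
  have hT : Integrable (Function.uncurry T) (μ0.prod μ0) := by
    have hbase : Integrable (fun yz : ℝ × ℝ => p yz.1 * q yz.2) (μ0.prod μ0) :=
      (hp.restrict).mul_prod (hq.restrict)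
    have heq : Function.uncurry T
        = ({yz : ℝ × ℝ | yz.2 ≤ yz.1}).indicator (fun yz => p yz.1 * q yz.2) := by
      ext yz
      by_cases h : yz.2 ≤ yz.1 <;>
        simp [Function.uncurry, hTdef, h, Set.indicator]
    rw [heq]
    exact hbase.indicator (measurableSet_le measurable_snd measurable_fst)
  have swap := MeasureTheory.integral_integral_swap hT
  -- left side of swap
  have L1 : ∀ y ∈ Ioc (0:ℝ) x, (∫ z in Ioc (0:ℝ) x, T y z) = p y * V y := by
    intro y hy
    have e : (fun z => T y z) = (Iic y).indicator (fun z => p y * q z) := by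
      ext z; by_cases h : z ≤ y <;> simp [hTdef, h, Set.indicator]
    rw [e, setIntegral_indicator measurableSet_Iic]
    have hs : Ioc (0:ℝ) x ∩ Iic y = Ioc 0 y := by
      rw [Set.Ioc_inter_Iic, min_eq_right hy.2]
    rw [hs, integral_const_mul]
    congr 1
    rw [hVdef]
    exact (intervalIntegral.integral_of_le hy.1.le).symm
  have R1 : ∀ z ∈ Ioc (0:ℝ) x, (∫ y in Ioc (0:ℝ) x, T y z) = q z * (P x - P z) := by
    intro z hz
    have e : (fun y => T y z) = (Ici z).indicator (fun y => p y * q z) := by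
      ext y; by_cases h : z ≤ y <;> simp [hTdef, h, Set.indicator]
    rw [e, setIntegral_indicator measurableSet_Ici]
    have hs : Ioc (0:ℝ) x ∩ Ici z = Icc z x := by
      ext y
      simp only [mem_inter_iff, mem_Ioc, mem_Ici, mem_Icc]
      constructor
      · rintro ⟨⟨_, h2⟩, h3⟩; exact ⟨h3, h2⟩
      · rintro ⟨h1, h2⟩; exact ⟨⟨lt_of_lt_of_le hz.1 h1, h2⟩, h1⟩
    rw [hs, integral_Icc_eq_integral_Ioc, integral_mul_const]
    have : (∫ y in Ioc z x, p y) = P x - P z := by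
      rw [hPdef]
      rw [← intervalIntegral.integral_of_le hz.2]
      exact (intervalIntegral.integral_interval_sub_left
        hp.intervalIntegrable hp.intervalIntegrable).symm
    rw [this]; ring
  have hA : (∫ y, (∫ z, T y z ∂μ0) ∂μ0) = ∫ y in Ioc (0:ℝ) x, p y * V y :=
    setIntegral_congr_fun measurableSet_Ioc L1
  have hB : (∫ z, (∫ y, T y z ∂μ0) ∂μ0) = ∫ z in Ioc (0:ℝ) x, q z * (P x - P z) :=
    setIntegral_congr_fun measurableSet_Ioc R1
  have hBval : (∫ z in Ioc (0:ℝ) x, q z * (P x - P z))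
      = P x * V x - ∫ z in Ioc (0:ℝ) x, q z * P z := by
    have e : ∀ z, q z * (P x - P z) = P x * q z - q z * P z := by intro z; ring
    simp_rw [e]
    rw [integral_sub ((hqI.const_mul (P x))) hqP, integral_const_mul]
    congr 2
    rw [hVdef]
    exact (intervalIntegral.integral_of_le hx).symm
  have key : (∫ y in Ioc (0:ℝ) x, p y * V y)
      = P x * V x - ∫ z in Ioc (0:ℝ) x, q z * P z := by
    rw [← hA, swap, hB, hBval]
  -- assemble
  rw [intervalIntegral.integral_of_le hx]
  have hcPq : IntegrableOn (fun y => (c + P y) * q y) (Ioc 0 x) := by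
    have := hqI.bdd_mul ((continuous_const.add hPc).aestronglyMeasurable.restrict)
      (c := |c| + ∫ y, |p y|) (Eventually.of_forall fun z => by
        calc ‖c + P z‖ ≤ ‖c‖ + ‖P z‖ := norm_add_le _ _
          _ ≤ |c| + ∫ y, |p y| := by exact add_le_add le_rfl (hPb z))
    exact this
  rw [integral_add hpV hcPq, key]
  have : (∫ y in Ioc (0:ℝ) x, (c + P y) * q y)
      = c * V x + ∫ z in Ioc (0:ℝ) x, q z * P z := by
    have e : ∀ y, (c + P y) * q y = c * q y + q y * P y := by intro y; ring
    simp_rw [e]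
    rw [integral_add (hqI.const_mul c) hqP, integral_const_mul]
    congr 2
    rw [hVdef]
    exact (intervalIntegral.integral_of_le hx).symm
  rw [this]
  have hVx : (∫ z in (0:ℝ)..x, q z) = V x := rfl
  have hPx : (∫ z in (0:ℝ)..x, p z) = P x := rfl
  rw [hVx, hPx]; ring

section weight
variable {w : ℝ → ℝ}

lemma wpos (hw : GoodWeight w) : ∀ x ∈ Ici (0:ℝ), 0 < w x := fun x hx => lt_of_lt_of_le one_pos (hw.1 x hx)

lemma wcont (hw : GoodWeight w) : ContinuousOn w (Ici 0) := hw.2.2.1.continuousOn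

lemma winv_int (hw : GoodWeight w) : IntegrableOn (fun x => (w x)⁻¹) (Ici 0) := by
  refine Integrable.mono' hw.2.2.2 ?_ ?_
  · exact (((wcont hw).aemeasurable measurableSet_Ici).inv).aestronglyMeasurable
  · refine (ae_restrict_iff' measurableSet_Ici).mpr (Eventually.of_forall fun x hx => ?_)
    have h1 : 1 ≤ w x := hw.1 x hx
    have hpos : 0 < w x := lt_of_lt_of_le one_pos h1
    rw [Real.norm_eq_abs, abs_of_nonneg (inv_nonneg.mpr hpos.le), ← Real.rpow_neg_one (w x)]
    exact Real.rpow_le_rpow_of_exponent_le h1 (by norm_num)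

lemma wC_nonneg (hw : GoodWeight w) : 0 ≤ ∫ x in Ici (0:ℝ), w x ^ (-(1/3):ℝ) := by
  refine setIntegral_nonneg measurableSet_Ici fun x hx => ?_
  exact (Real.rpow_pos_of_pos (wpos hw x hx) _).le

/-- key pointwise bound -/
lemma key (hw : GoodWeight w) {φ φ' : ℝ → ℝ} (hφ : IsHw w φ φ') (hlim : Tendsto φ atTop (nhds 0)) :
    IntegrableOn φ' (Ici 0) ∧
    ∀ y, 0 ≤ y → |φ y| ≤ normW w φ φ' * Real.sqrt (∫ x in Ici (0:ℝ), w x ^ (-(1/3):ℝ))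
      * w y ^ (-(1/3):ℝ) := by
  obtain ⟨hm, hi, hrep⟩ := hφ
  set C := ∫ x in Ici (0:ℝ), w x ^ (-(1/3):ℝ) with hCdef
  set N := normW w φ φ' with hNdef
  have hNnn : 0 ≤ N := Real.sqrt_nonneg _
  have hI0 : 0 ≤ ∫ x in Ici (0:ℝ), φ' x ^ 2 * w x :=
    setIntegral_nonneg measurableSet_Ici fun x hx =>
      mul_nonneg (sq_nonneg _) (wpos hw x hx).le
  have hN2 : ∫ x in Ici (0:ℝ), φ' x ^ 2 * w x ≤ N ^ 2 := by
    rw [hNdef, normW, Real.sq_sqrt (by positivity)]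
    nlinarith [sq_nonneg (φ 0)]
  -- integrability of φ' on Ici 0
  have hint : IntegrableOn φ' (Ici 0) := by
    refine Integrable.mono' (((hi.add (winv_int hw))).div_const 2) hm.aestronglyMeasurable.restrict ?_
    refine (ae_restrict_iff' measurableSet_Ici).mpr (Eventually.of_forall fun x hx => ?_)
    have h1 : 1 ≤ w x := hw.1 x hx
    have hpos : 0 < w x := lt_of_lt_of_le one_pos h1
    have hc : w x * (w x)⁻¹ = 1 := mul_inv_cancel₀ hpos.ne'
    have h2 := sq_nonneg (|φ' x| * w x - 1)
    have h3 : |φ' x| ^ 2 = φ' x ^ 2 := sq_abs _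
    have h4 : 0 < (w x)⁻¹ := inv_pos.mpr hpos
    rw [Real.norm_eq_abs]
    have h5 : 0 ≤ (|φ' x| * w x - 1) ^ 2 * (w x)⁻¹ := mul_nonneg h2 h4.le
    have expand : (|φ' x| * w x - 1) ^ 2 * (w x)⁻¹
        = φ' x ^ 2 * w x * (w x * (w x)⁻¹) - 2 * |φ' x| * (w x * (w x)⁻¹) + (w x)⁻¹ := by
      rw [← h3]; ring
    rw [hc] at expand
    simp only [Pi.add_apply]
    nlinarith [h5, expand]
  -- representation of φ 0
  have hrep' : ∀ x : ℝ, 0 ≤ x → φ x = φ 0 + ∫ t in Ioc (0:ℝ) x, φ' t := by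
    intro x hx
    rw [hrep x hx, intervalIntegral.integral_of_le hx]
  have hintIoi : IntegrableOn φ' (Ioi 0) := hint.mono_set Ioi_subset_Ici_self
  have hlim2 : Tendsto φ atTop (nhds (φ 0 + ∫ t in Ioi (0:ℝ), φ' t)) := by
    have h1 : Tendsto (fun x : ℝ => φ 0 + ∫ t in (0:ℝ)..x, φ' t) atTop
        (nhds (φ 0 + ∫ t in Ioi (0:ℝ), φ' t)) :=
      tendsto_const_nhds.add
        (MeasureTheory.intervalIntegral_tendsto_integral_Ioi 0 hintIoi tendsto_id)
    refine h1.congr' ?_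
    filter_upwards [eventually_ge_atTop (0:ℝ)] with x hx
    exact (hrep x hx).symm
  have h0 : φ 0 + ∫ t in Ioi (0:ℝ), φ' t = 0 := tendsto_nhds_unique hlim2 hlim
  -- Cauchy-Schwarz tail estimate
  have cs : ∀ y : ℝ, 0 ≤ y → (∫ z in Ioi y, |φ' z|) ≤ N * Real.sqrt C * w y ^ (-(1/3):ℝ) := by
    intro y hy
    have hsub : Ioi y ⊆ Ici (0:ℝ) := fun z hz => le_of_lt (lt_of_le_of_lt hy hz)
    have hwae : AEMeasurable w (volume.restrict (Ioi y)) :=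
      ((wcont hw).mono hsub).aemeasurable measurableSet_Ioi
    have hwy1 : 1 ≤ w y := hw.1 y hy
    have hwypos : 0 < w y := lt_of_lt_of_le one_pos hwy1
    set f : ℝ → ℝ := fun z => |φ' z| * Real.sqrt (w z) with hfdef
    set g : ℝ → ℝ := fun z => (Real.sqrt (w z))⁻¹ with hgdef
    have hsq : AEMeasurable (fun z => Real.sqrt (w z)) (volume.restrict (Ioi y)) :=
      Real.continuous_sqrt.measurable.comp_aemeasurable hwae
    have hfm : AEStronglyMeasurable f (volume.restrict (Ioi y)) :=
      ((hm.abs.aemeasurable.restrict).mul hsq).aestronglyMeasurable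
    have hgm : AEStronglyMeasurable g (volume.restrict (Ioi y)) :=
      (hsq.inv).aestronglyMeasurable
    have hae : ∀ᵐ z ∂(volume.restrict (Ioi y)), z ∈ Ioi y :=
      (ae_restrict_iff' measurableSet_Ioi).mpr (Eventually.of_forall fun z hz => hz)
    have hf2 : Integrable (fun z => f z ^ 2) (volume.restrict (Ioi y)) := by
      refine (hi.mono_set hsub).congr ?_
      filter_upwards [hae] with z hz
      have hwz : 0 ≤ w z := (wpos hw z (hsub hz)).le
      rw [hfdef]; simp only
      rw [mul_pow, sq_abs, Real.sq_sqrt hwz]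
    have hg2 : Integrable (fun z => g z ^ 2) (volume.restrict (Ioi y)) := by
      refine ((winv_int hw).mono_set hsub).congr ?_
      filter_upwards [hae] with z hz
      have hwz : 0 ≤ w z := (wpos hw z (hsub hz)).le
      rw [hgdef]; simp only
      rw [← Real.sqrt_inv, Real.sq_sqrt (inv_nonneg.mpr hwz)]
    have hcs := myCS f g hfm hgm
      (Eventually.of_forall fun z => mul_nonneg (abs_nonneg _) (Real.sqrt_nonneg _))
      (Eventually.of_forall fun z => inv_nonneg.mpr (Real.sqrt_nonneg _)) hf2 hg2
    have e1 : (∫ z in Ioi y, f z * g z) = ∫ z in Ioi y, |φ' z| := by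
      refine integral_congr_ae ?_
      filter_upwards [hae] with z hz
      have hwz : 0 < w z := wpos hw z (hsub hz)
      rw [hfdef, hgdef]; simp only
      rw [mul_assoc, mul_inv_cancel₀ (Real.sqrt_pos.mpr hwz).ne', mul_one]
    have e2 : (∫ z in Ioi y, f z ^ 2) = ∫ z in Ioi y, φ' z ^ 2 * w z := by
      refine integral_congr_ae ?_
      filter_upwards [hae] with z hz
      have hwz : 0 ≤ w z := (wpos hw z (hsub hz)).le
      rw [hfdef]; simp only
      rw [mul_pow, sq_abs, Real.sq_sqrt hwz]
    have e3 : (∫ z in Ioi y, g z ^ 2) = ∫ z in Ioi y, (w z)⁻¹ := by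
      refine integral_congr_ae ?_
      filter_upwards [hae] with z hz
      have hwz : 0 ≤ w z := (wpos hw z (hsub hz)).le
      rw [hgdef]; simp only
      rw [← Real.sqrt_inv, Real.sq_sqrt (inv_nonneg.mpr hwz)]
    rw [e1, e2, e3] at hcs
    -- bound first factor by N
    have b1 : Real.sqrt (∫ z in Ioi y, φ' z ^ 2 * w z) ≤ N := by
      have hmono : (∫ z in Ioi y, φ' z ^ 2 * w z) ≤ ∫ x in Ici (0:ℝ), φ' x ^ 2 * w x := by
        refine setIntegral_mono_set hi ?_ (HasSubset.Subset.eventuallyLE hsub)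
        refine (ae_restrict_iff' measurableSet_Ici).mpr (Eventually.of_forall fun x hx => ?_)
        exact mul_nonneg (sq_nonneg _) (wpos hw x hx).le
      calc Real.sqrt (∫ z in Ioi y, φ' z ^ 2 * w z) ≤ Real.sqrt (N ^ 2) :=
            Real.sqrt_le_sqrt (le_trans hmono hN2)
        _ = N := Real.sqrt_sq hNnn
    -- bound second factor
    have b2 : Real.sqrt (∫ z in Ioi y, (w z)⁻¹) ≤ Real.sqrt C * w y ^ (-(1/3):ℝ) := by
      have tb : (∫ z in Ioi y, (w z)⁻¹) ≤ w y ^ (-(2/3):ℝ) * C := by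
        have step1 : (∫ z in Ioi y, (w z)⁻¹)
            ≤ ∫ z in Ioi y, w y ^ (-(2/3):ℝ) * w z ^ (-(1/3):ℝ) := by
          refine setIntegral_mono_on ((winv_int hw).mono_set hsub)
            (((hw.2.2.2).mono_set hsub).const_mul _) measurableSet_Ioi fun z hz => ?_
          have hwz1 : 1 ≤ w z := hw.1 z (hsub hz)
          have hwzpos : 0 < w z := lt_of_lt_of_le one_pos hwz1
          have hyz : w y ≤ w z := hw.2.1 hy (hsub hz) (le_of_lt hz)
          have e : (w z)⁻¹ = w z ^ (-(2/3):ℝ) * w z ^ (-(1/3):ℝ) := by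
            rw [← Real.rpow_add hwzpos, ← Real.rpow_neg_one (w z)]
            norm_num
          rw [e]
          refine mul_le_mul_of_nonneg_right ?_ (Real.rpow_pos_of_pos hwzpos _).le
          exact Real.rpow_le_rpow_of_nonpos hwypos hyz (by norm_num)
        have step2 : (∫ z in Ioi y, w y ^ (-(2/3):ℝ) * w z ^ (-(1/3):ℝ))
            = w y ^ (-(2/3):ℝ) * ∫ z in Ioi y, w z ^ (-(1/3):ℝ) := integral_const_mul _ _
        have step3 : (∫ z in Ioi y, w z ^ (-(1/3):ℝ)) ≤ C := by
          refine setIntegral_mono_set hw.2.2.2 ?_ (HasSubset.Subset.eventuallyLE hsub)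
          refine (ae_restrict_iff' measurableSet_Ici).mpr (Eventually.of_forall fun x hx => ?_)
          exact (Real.rpow_pos_of_pos (wpos hw x hx) _).le
        calc (∫ z in Ioi y, (w z)⁻¹) ≤ _ := step1
          _ = _ := step2
          _ ≤ w y ^ (-(2/3):ℝ) * C :=
            mul_le_mul_of_nonneg_left step3 (Real.rpow_pos_of_pos hwypos _).le
      have e4 : w y ^ (-(2/3):ℝ) = (w y ^ (-(1/3):ℝ)) ^ 2 := by
        rw [← Real.rpow_natCast (w y ^ (-(1/3):ℝ)) 2, ← Real.rpow_mul hwypos.le]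
        norm_num
      calc Real.sqrt (∫ z in Ioi y, (w z)⁻¹) ≤ Real.sqrt (w y ^ (-(2/3):ℝ) * C) :=
            Real.sqrt_le_sqrt tb
        _ = Real.sqrt C * w y ^ (-(1/3):ℝ) := by
            rw [Real.sqrt_mul (Real.rpow_pos_of_pos hwypos _).le, e4,
              Real.sqrt_sq (Real.rpow_pos_of_pos hwypos _).le, mul_comm]
    calc (∫ z in Ioi y, |φ' z|) ≤ _ := hcs
      _ ≤ N * (Real.sqrt C * w y ^ (-(1/3):ℝ)) := by
          refine mul_le_mul b1 b2 (Real.sqrt_nonneg _) hNnn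
      _ = N * Real.sqrt C * w y ^ (-(1/3):ℝ) := by ring
  refine ⟨hint, fun y hy => ?_⟩
  -- φ y = -∫_{Ioi y} φ'
  have hsplit : (∫ t in Ioi (0:ℝ), φ' t) = (∫ t in Ioc (0:ℝ) y, φ' t) + ∫ t in Ioi y, φ' t := by
    rw [← setIntegral_union (Set.Ioc_disjoint_Ioi le_rfl) measurableSet_Ioi
      (hint.mono_set (fun z hz => le_of_lt hz.1)) (hint.mono_set (fun z hz => le_trans hy (le_of_lt hz)))]
    rw [Set.Ioc_union_Ioi_eq_Ioi hy]
  have hval : φ y = -∫ t in Ioi y, φ' t := by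
    have := hrep' y hy
    have h2 : φ 0 = -(∫ t in Ioi (0:ℝ), φ' t) := by linarith
    rw [this, h2, hsplit]; ring
  rw [hval, abs_neg]
  calc |∫ t in Ioi y, φ' t| ≤ ∫ t in Ioi y, |φ' t| := by
        simpa using norm_integral_le_integral_norm (μ := volume.restrict (Ioi y)) φ'
    _ ≤ _ := cs y hy
end weight


set_option maxHeartbeats 4000000 in
/-- local Lipschitz estimate for `F` on `H_w⁰`. -/
theorem stmt10 (w : ℝ → ℝ) (hw : GoodWeight w) :
    ∃ L > (0:ℝ), ∀ f f' h h' : ℝ → ℝ, IsHw w f f' → IsHw w h h' →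
      Filter.Tendsto f Filter.atTop (nhds 0) →
      Filter.Tendsto h Filter.atTop (nhds 0) →
      ∃ g' : ℝ → ℝ, IsHw w (fun x => Fop f x - Fop h x) g' ∧
        normW w (fun x => Fop f x - Fop h x) g' ≤
          L * (normW w f f' + normW w h h') *
            normW w (fun x => f x - h x) (fun x => f' x - h' x) := by
  classical
  set C := ∫ x in Ici (0:ℝ), w x ^ (-(1/3):ℝ) with hCdef
  have hC0 : 0 ≤ C := wC_nonneg hw
  set t := Real.sqrt (C ^ 3) with htdef
  have ht0 : 0 ≤ t := Real.sqrt_nonneg _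
  have ht2 : t ^ 2 = C ^ 3 := Real.sq_sqrt (by positivity)
  refine ⟨3 * (t + 1), by positivity, ?_⟩
  intro f f' h h' hf hh hft hht
  set s := Real.sqrt C with hsdef
  have hs0 : 0 ≤ s := Real.sqrt_nonneg _
  have hs2 : s ^ 2 = C := Real.sq_sqrt hC0
  set Nf := normW w f f' with hNfdef
  set Nh := normW w h h' with hNhdef
  set Ng := normW w (fun x => f x - h x) (fun x => f' x - h' x) with hNgdef
  have hNf0 : 0 ≤ Nf := Real.sqrt_nonneg _
  have hNh0 : 0 ≤ Nh := Real.sqrt_nonneg _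
  have hNg0 : 0 ≤ Ng := Real.sqrt_nonneg _
  have hwae : AEMeasurable w (volume.restrict (Ici (0:ℝ))) :=
    (wcont hw).aemeasurable measurableSet_Ici
  have hfint : IntegrableOn f' (Ici 0) := (key hw hf hft).1
  have hhint : IntegrableOn h' (Ici 0) := (key hw hh hht).1
  have hII : ∀ {r : ℝ → ℝ}, IntegrableOn r (Ici 0) → ∀ {x : ℝ}, 0 ≤ x →
      IntervalIntegrable r volume 0 x := by
    intro r hr x hx
    rw [intervalIntegrable_iff_integrableOn_Ioc_of_le hx]
    exact hr.mono_set (fun z hz => le_of_lt hz.1)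
  have hgsq : IntegrableOn (fun x => (f' x - h' x) ^ 2 * w x) (Ici 0) := by
    refine Integrable.mono' ((hf.2.1.const_mul 2).add (hh.2.1.const_mul 2)) ?_ ?_
    · exact ((((hf.1.sub hh.1).pow_const 2).aemeasurable.restrict).mul hwae).aestronglyMeasurable
    · refine (ae_restrict_iff' measurableSet_Ici).mpr (Eventually.of_forall fun x hx => ?_)
      have hwx : 0 ≤ w x := (wpos hw x hx).le
      rw [Real.norm_eq_abs, abs_of_nonneg (mul_nonneg (sq_nonneg _) hwx)]
      simp only [Pi.add_apply]
      nlinarith [mul_nonneg (sq_nonneg (f' x + h' x)) hwx]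
  have hg : IsHw w (fun x => f x - h x) (fun x => f' x - h' x) := by
    refine ⟨hf.1.sub hh.1, hgsq, fun x hx => ?_⟩
    show f x - h x = (f 0 - h 0) + ∫ y in (0:ℝ)..x, (f' y - h' y)
    rw [hf.2.2 x hx, hh.2.2 x hx,
      intervalIntegral.integral_sub (hII hfint hx) (hII hhint hx)]
    ring
  have hgt : Tendsto (fun x => f x - h x) atTop (nhds 0) := by
    simpa using hft.sub hht
  have bf := (key hw hf hft).2
  have bh := (key hw hh hht).2
  have bg := (key hw hg hgt).2
  set Ef' : ℝ → ℝ := (Ici (0:ℝ)).indicator f' with hEfdef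
  set Eh' : ℝ → ℝ := (Ici (0:ℝ)).indicator h' with hEhdef
  set Eg' : ℝ → ℝ := (Ici (0:ℝ)).indicator (fun x => f' x - h' x) with hEgdef
  have hEfi : Integrable Ef' := (integrable_indicator_iff measurableSet_Ici).mpr hfint
  have hEhi : Integrable Eh' := (integrable_indicator_iff measurableSet_Ici).mpr hhint
  have hgint' : IntegrableOn (fun x => f' x - h' x) (Ici 0) := hfint.sub hhint
  have hEgi : Integrable Eg' := (integrable_indicator_iff measurableSet_Ici).mpr hgint'
  set ftil : ℝ → ℝ := fun x => f 0 + ∫ u in (0:ℝ)..x, Ef' u with hftildef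
  set htil : ℝ → ℝ := fun x => h 0 + ∫ u in (0:ℝ)..x, Eh' u with hhtildef
  have hftilc : Continuous ftil := continuous_const.add (hEfi.continuous_primitive 0)
  have hhtilc : Continuous htil := continuous_const.add (hEhi.continuous_primitive 0)
  set gtil : ℝ → ℝ := fun x => ftil x - htil x with hgtildef
  have hgtilc : Continuous gtil := hftilc.sub hhtilc
  have hEq : ∀ {r r' : ℝ → ℝ}, IsHw w r r' → IntegrableOn r' (Ici 0) → ∀ x, 0 ≤ x →
      r 0 + (∫ u in (0:ℝ)..x, (Ici (0:ℝ)).indicator r' u) = r x := by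
    intro r r' hr hri x hx
    rw [hr.2.2 x hx]
    congr 1
    refine intervalIntegral.integral_congr fun u hu => ?_
    rw [uIcc_of_le hx] at hu
    exact indicator_of_mem (hu.1 : (0:ℝ) ≤ u) r'
  have hftil_eq : ∀ x, 0 ≤ x → ftil x = f x := fun x hx => hEq hf hfint x hx
  have hhtil_eq : ∀ x, 0 ≤ x → htil x = h x := fun x hx => hEq hh hhint x hx
  have hgtil_eq : ∀ x, 0 ≤ x → gtil x = f x - h x := by
    intro x hx
    rw [hgtildef]; simp only
    rw [hftil_eq x hx, hhtil_eq x hx]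
  have bftil : ∀ y, 0 ≤ y → |ftil y| ≤ Nf * s * w y ^ (-(1/3):ℝ) := by
    intro y hy; rw [hftil_eq y hy]; exact bf y hy
  have bhtil : ∀ y, 0 ≤ y → |htil y| ≤ Nh * s * w y ^ (-(1/3):ℝ) := by
    intro y hy; rw [hhtil_eq y hy]; exact bh y hy
  have bgtil : ∀ y, 0 ≤ y → |gtil y| ≤ Ng * s * w y ^ (-(1/3):ℝ) := by
    intro y hy; rw [hgtil_eq y hy]; exact bg y hy
  have htil_int : ∀ {r : ℝ → ℝ} {Nr : ℝ}, Continuous r →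
      (∀ y, 0 ≤ y → |r y| ≤ Nr * s * w y ^ (-(1/3):ℝ)) → IntegrableOn r (Ici 0) := by
    intro r Nr hrc hb
    refine Integrable.mono' ((hw.2.2.2).const_mul (Nr * s)) hrc.aestronglyMeasurable.restrict ?_
    refine (ae_restrict_iff' measurableSet_Ici).mpr (Eventually.of_forall fun x hx => ?_)
    simpa using hb x hx
  have hgtil_int : IntegrableOn gtil (Ici 0) := htil_int hgtilc bgtil
  have hhtil_int : IntegrableOn htil (Ici 0) := htil_int hhtilc bhtil
  set gext : ℝ → ℝ := (Ici (0:ℝ)).indicator gtil with hgextdef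
  set hext : ℝ → ℝ := (Ici (0:ℝ)).indicator htil with hhextdef
  have hgexti : Integrable gext := (integrable_indicator_iff measurableSet_Ici).mpr hgtil_int
  have hhexti : Integrable hext := (integrable_indicator_iff measurableSet_Ici).mpr hhtil_int
  set Qg : ℝ → ℝ := fun x => ∫ u in (0:ℝ)..x, gext u with hQgdef
  set Qh : ℝ → ℝ := fun x => ∫ u in (0:ℝ)..x, hext u with hQhdef
  have hQgc : Continuous Qg := hgexti.continuous_primitive 0
  have hQhc : Continuous Qh := hhexti.continuous_primitive 0
  have hQbd : ∀ {r : ℝ → ℝ} {Nr : ℝ}, IntegrableOn r (Ici 0) →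
      (∀ y, 0 ≤ y → |r y| ≤ Nr * s * w y ^ (-(1/3):ℝ)) →
      ∀ z, |∫ u in (0:ℝ)..z, (Ici (0:ℝ)).indicator r u| ≤ Nr * s * C := by
    intro r Nr hri hb z
    have hri' : Integrable ((Ici (0:ℝ)).indicator r) :=
      (integrable_indicator_iff measurableSet_Ici).mpr hri
    calc |∫ u in (0:ℝ)..z, (Ici (0:ℝ)).indicator r u| ≤ ∫ u, |(Ici (0:ℝ)).indicator r u| :=
          prim_bound hri' z
      _ = ∫ u in Ici (0:ℝ), |r u| := by
          rw [← integral_indicator measurableSet_Ici]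
          congr 1
          ext u
          by_cases hu : u ∈ Ici (0:ℝ) <;> simp [Set.indicator, hu]
      _ ≤ ∫ u in Ici (0:ℝ), Nr * s * w u ^ (-(1/3):ℝ) := by
          refine setIntegral_mono_on hri.abs ((hw.2.2.2).const_mul _) measurableSet_Ici ?_
          intro u hu
          exact hb u hu
      _ = Nr * s * C := by rw [integral_const_mul]
  have hQgb : ∀ z, |Qg z| ≤ Ng * s * C := hQbd hgtil_int bgtil
  have hQhb : ∀ z, |Qh z| ≤ Nh * s * C := hQbd hhtil_int bhtil
  set inr : ℝ → ℝ := fun x =>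
    f' x * Qg x + ftil x * gtil x + (f' x - h' x) * Qh x + gtil x * htil x with hinrdef
  set g'fun : ℝ → ℝ := (Ici (0:ℝ)).indicator inr with hg'def
  have hinrm : Measurable inr :=
    (((hf.1.mul hQgc.measurable).add
      (hftilc.measurable.mul hgtilc.measurable)).add
      ((hf.1.sub hh.1).mul hQhc.measurable)).add
      (hgtilc.measurable.mul hhtilc.measurable)
  have hg'm : Measurable g'fun := hinrm.indicator measurableSet_Ici
  set D : ℝ → ℝ := fun x =>
    4 * ((Ng * s * C) ^ 2 * (f' x ^ 2 * w x) + (Nf * s * (Ng * s)) ^ 2 * w x ^ (-(1/3):ℝ)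
      + (Nh * s * C) ^ 2 * ((f' x - h' x) ^ 2 * w x)
      + (Ng * s * (Nh * s)) ^ 2 * w x ^ (-(1/3):ℝ)) with hDdef
  have hpt : ∀ x ∈ Ici (0:ℝ), inr x ^ 2 * w x ≤ D x := by
    intro x hx
    have hwx1 : 1 ≤ w x := hw.1 x hx
    have hwxp : 0 < w x := lt_of_lt_of_le one_pos hwx1
    set u : ℝ := w x ^ (-(1/3):ℝ) with hudef
    have hu0 : 0 < u := Real.rpow_pos_of_pos hwxp _
    have hu4 : u ^ 4 * w x = u := by
      rw [hudef, ← Real.rpow_natCast (w x ^ (-(1/3):ℝ)) 4, ← Real.rpow_mul hwxp.le]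
      nth_rewrite 2 [← Real.rpow_one (w x)]
      rw [← Real.rpow_add hwxp]
      norm_num
    set a := |f' x| * (Ng * s * C) with hadef
    set b := Nf * s * (Ng * s) * u ^ 2 with hbdef
    set c := |f' x - h' x| * (Nh * s * C) with hcdef
    set d := Ng * s * (Nh * s) * u ^ 2 with hddef
    have habs : |inr x| ≤ a + b + c + d := by
      have e1 : |f' x * Qg x| ≤ a := by
        rw [abs_mul, hadef]
        exact mul_le_mul_of_nonneg_left (hQgb x) (abs_nonneg _)
      have e2 : |ftil x * gtil x| ≤ b := by
        rw [abs_mul, hbdef]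
        calc |ftil x| * |gtil x| ≤ (Nf * s * u) * (Ng * s * u) :=
              mul_le_mul (bftil x hx) (bgtil x hx) (abs_nonneg _) (by positivity)
          _ = Nf * s * (Ng * s) * u ^ 2 := by ring
      have e3 : |(f' x - h' x) * Qh x| ≤ c := by
        rw [abs_mul, hcdef]
        exact mul_le_mul_of_nonneg_left (hQhb x) (abs_nonneg _)
      have e4 : |gtil x * htil x| ≤ d := by
        rw [abs_mul, hddef]
        calc |gtil x| * |htil x| ≤ (Ng * s * u) * (Nh * s * u) :=
              mul_le_mul (bgtil x hx) (bhtil x hx) (abs_nonneg _) (by positivity)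
          _ = Ng * s * (Nh * s) * u ^ 2 := by ring
      calc |inr x| ≤ |f' x * Qg x + ftil x * gtil x + (f' x - h' x) * Qh x| + |gtil x * htil x| :=
            abs_add_le _ _
        _ ≤ (|f' x * Qg x + ftil x * gtil x| + |(f' x - h' x) * Qh x|) + |gtil x * htil x| :=
            add_le_add_left (abs_add_le _ _) _
        _ ≤ ((|f' x * Qg x| + |ftil x * gtil x|) + |(f' x - h' x) * Qh x|) + |gtil x * htil x| :=
            add_le_add_left (add_le_add_left (abs_add_le _ _) _) _
        _ ≤ a + b + c + d := by linarith
    have h1 : inr x ^ 2 ≤ (a + b + c + d) ^ 2 := by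
      rw [← sq_abs]
      exact pow_le_pow_left₀ (abs_nonneg _) habs 2
    have h2 : (a + b + c + d) ^ 2 ≤ 4 * (a ^ 2 + b ^ 2 + c ^ 2 + d ^ 2) := by
      nlinarith [sq_nonneg (a - b), sq_nonneg (a - c), sq_nonneg (a - d),
        sq_nonneg (b - c), sq_nonneg (b - d), sq_nonneg (c - d)]
    have h3 : inr x ^ 2 * w x ≤ 4 * (a ^ 2 + b ^ 2 + c ^ 2 + d ^ 2) * w x :=
      mul_le_mul_of_nonneg_right (le_trans h1 h2) hwxp.le
    have h4 : 4 * (a ^ 2 + b ^ 2 + c ^ 2 + d ^ 2) * w x = D x := by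
      rw [hDdef, hadef, hbdef, hcdef, hddef]
      simp only
      rw [← hudef]
      have e : 4 * ((|f' x| * (Ng * s * C)) ^ 2 + (Nf * s * (Ng * s) * u ^ 2) ^ 2
          + (|f' x - h' x| * (Nh * s * C)) ^ 2 + (Ng * s * (Nh * s) * u ^ 2) ^ 2) * w x
          = 4 * ((Ng * s * C) ^ 2 * (|f' x| ^ 2 * w x)
            + (Nf * s * (Ng * s)) ^ 2 * (u ^ 4 * w x)
            + (Nh * s * C) ^ 2 * (|f' x - h' x| ^ 2 * w x)
            + (Ng * s * (Nh * s)) ^ 2 * (u ^ 4 * w x)) := by ring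
      rw [e, hu4]
      simp [sq_abs]
    linarith [h3, h4.le]
  have hDint : IntegrableOn D (Ici 0) := by
    refine (((((hf.2.1.const_mul ((Ng * s * C) ^ 2)).add
      ((hw.2.2.2).const_mul ((Nf * s * (Ng * s)) ^ 2))).add
      (hgsq.const_mul ((Nh * s * C) ^ 2))).add
      ((hw.2.2.2).const_mul ((Ng * s * (Nh * s)) ^ 2))).const_mul 4).congr ?_
    refine Eventually.of_forall fun x => ?_
    simp only [hDdef, Pi.add_apply]
    try ring
  have hG2int : IntegrableOn (fun x => g'fun x ^ 2 * w x) (Ici 0) := by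
    refine Integrable.mono' hDint ?_ ?_
    · exact (((hg'm.pow_const 2).aemeasurable.restrict).mul hwae).aestronglyMeasurable
    · refine (ae_restrict_iff' measurableSet_Ici).mpr (Eventually.of_forall fun x hx => ?_)
      have hwx : 0 ≤ w x := (wpos hw x hx).le
      rw [Real.norm_eq_abs, abs_of_nonneg (mul_nonneg (sq_nonneg _) hwx)]
      have e : g'fun x = inr x := indicator_of_mem hx inr
      rw [e]
      exact hpt x hx
  have hFop0 : Fop f 0 - Fop h 0 = 0 := by
    simp [Fop, intervalIntegral.integral_same]
  have hFTC : ∀ x, 0 ≤ x → Fop f x - Fop h x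
      = (Fop f 0 - Fop h 0) + ∫ y in (0:ℝ)..x, g'fun y := by
    intro x hx
    rw [hFop0, zero_add]
    have e0 : (∫ y in (0:ℝ)..x, g'fun y) = ∫ y in (0:ℝ)..x, inr y := by
      refine intervalIntegral.integral_congr fun y hy => ?_
      rw [uIcc_of_le hx] at hy
      exact indicator_of_mem (hy.1 : (0:ℝ) ≤ y) inr
    have hbd1 : Integrable (fun y => Ef' y * Qg y) := by
      have := hEfi.bdd_mul hQgc.aestronglyMeasurable (Eventually.of_forall fun z => hQgb z)
      simpa [mul_comm] using this
    have hftil_bd : ∀ z, ‖ftil z‖ ≤ |f 0| + ∫ u, |Ef' u| := by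
      intro z
      calc ‖ftil z‖ ≤ |f 0| + |∫ u in (0:ℝ)..z, Ef' u| := by
            rw [Real.norm_eq_abs]; exact abs_add_le _ _
        _ ≤ |f 0| + ∫ u, |Ef' u| := add_le_add_right (prim_bound hEfi z) _
    have hhtil_bd : ∀ z, ‖htil z‖ ≤ |h 0| + ∫ u, |Eh' u| := by
      intro z
      calc ‖htil z‖ ≤ |h 0| + |∫ u in (0:ℝ)..z, Eh' u| := by
            rw [Real.norm_eq_abs]; exact abs_add_le _ _
        _ ≤ |h 0| + ∫ u, |Eh' u| := add_le_add_right (prim_bound hEhi z) _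
    have hgtil_bd : ∀ z, ‖gtil z‖ ≤ (|f 0| + ∫ u, |Ef' u|) + (|h 0| + ∫ u, |Eh' u|) := by
      intro z
      calc ‖gtil z‖ ≤ ‖ftil z‖ + ‖htil z‖ := norm_sub_le _ _
        _ ≤ _ := add_le_add (hftil_bd z) (hhtil_bd z)
    have hbd2 : Integrable (fun y => ftil y * gext y) :=
      hgexti.bdd_mul hftilc.aestronglyMeasurable (Eventually.of_forall hftil_bd)
    have hbd3 : Integrable (fun y => Eg' y * Qh y) := by
      have := hEgi.bdd_mul hQhc.aestronglyMeasurable (Eventually.of_forall fun z => hQhb z)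
      simpa [mul_comm] using this
    have hbd4 : Integrable (fun y => gtil y * hext y) :=
      hhexti.bdd_mul hgtilc.aestronglyMeasurable (Eventually.of_forall hgtil_bd)
    have e1 : (∫ y in (0:ℝ)..x, inr y)
        = ∫ y in (0:ℝ)..x,
            ((Ef' y * Qg y + ftil y * gext y) + (Eg' y * Qh y + gtil y * hext y)) := by
      refine intervalIntegral.integral_congr fun y hy => ?_
      rw [uIcc_of_le hx] at hy
      have hy0 : y ∈ Ici (0:ℝ) := hy.1
      rw [hinrdef, hEfdef, hEgdef, hgextdef, hhextdef]
      simp only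
      rw [indicator_of_mem hy0, indicator_of_mem hy0, indicator_of_mem hy0,
        indicator_of_mem hy0]
      ring
    have e2 : (∫ y in (0:ℝ)..x,
          ((Ef' y * Qg y + ftil y * gext y) + (Eg' y * Qh y + gtil y * hext y)))
        = (∫ y in (0:ℝ)..x, (Ef' y * Qg y + ftil y * gext y))
          + ∫ y in (0:ℝ)..x, (Eg' y * Qh y + gtil y * hext y) :=
      intervalIntegral.integral_add (hbd1.add hbd2).intervalIntegrable
        (hbd3.add hbd4).intervalIntegrable
    have p1 : (∫ y in (0:ℝ)..x, (Ef' y * Qg y + ftil y * gext y)) = ftil x * Qg x := by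
      have hp := parts hEfi hgexti (f 0) hx
      exact hp
    have hEg_eq : ∀ y : ℝ, (f 0 - h 0) + (∫ u in (0:ℝ)..y, Eg' u) = gtil y := by
      intro y
      have hsub : (∫ u in (0:ℝ)..y, Eg' u)
          = (∫ u in (0:ℝ)..y, Ef' u) - ∫ u in (0:ℝ)..y, Eh' u := by
        rw [← intervalIntegral.integral_sub hEfi.intervalIntegrable hEhi.intervalIntegrable]
        refine intervalIntegral.integral_congr fun z _ => ?_
        rw [hEgdef, hEfdef, hEhdef]
        by_cases hzz : z ∈ Ici (0:ℝ) <;> simp [Set.indicator, hzz]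
      rw [hsub, hgtildef, hftildef, hhtildef]
      simp only
      ring
    have p2 : (∫ y in (0:ℝ)..x, (Eg' y * Qh y + gtil y * hext y)) = gtil x * Qh x := by
      have hp := parts hEgi hhexti (f 0 - h 0) hx
      have e3 : (∫ y in (0:ℝ)..x, (Eg' y * (∫ z in (0:ℝ)..y, hext z)
          + ((f 0 - h 0) + ∫ z in (0:ℝ)..y, Eg' z) * hext y))
          = ∫ y in (0:ℝ)..x, (Eg' y * Qh y + gtil y * hext y) := by
        refine intervalIntegral.integral_congr fun y _ => ?_
        rw [hEg_eq y]
      rw [e3] at hp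
      rw [hp, hEg_eq x]
    have hIf : (∫ y in (0:ℝ)..x, f y) = ∫ y in (0:ℝ)..x, ftil y := by
      refine intervalIntegral.integral_congr fun y hy => ?_
      rw [uIcc_of_le hx] at hy
      exact (hftil_eq y hy.1).symm
    have hIh : (∫ y in (0:ℝ)..x, h y) = ∫ y in (0:ℝ)..x, htil y := by
      refine intervalIntegral.integral_congr fun y hy => ?_
      rw [uIcc_of_le hx] at hy
      exact (hhtil_eq y hy.1).symm
    have hQg_eq : Qg x = (∫ y in (0:ℝ)..x, f y) - ∫ y in (0:ℝ)..x, h y := by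
      have e : Qg x = ∫ y in (0:ℝ)..x, gtil y := by
        rw [hQgdef]
        refine intervalIntegral.integral_congr fun y hy => ?_
        rw [uIcc_of_le hx] at hy
        exact indicator_of_mem (hy.1 : (0:ℝ) ≤ y) gtil
      rw [e, hIf, hIh, hgtildef,
        ← intervalIntegral.integral_sub (hftilc.intervalIntegrable 0 x)
          (hhtilc.intervalIntegrable 0 x)]
    have hQh_eq : Qh x = ∫ y in (0:ℝ)..x, h y := by
      rw [hIh, hQhdef]
      refine intervalIntegral.integral_congr fun y hy => ?_
      rw [uIcc_of_le hx] at hy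
      exact indicator_of_mem (hy.1 : (0:ℝ) ≤ y) htil
    rw [e0, e1, e2, p1, p2]
    rw [hftil_eq x hx, hgtil_eq x hx, hQg_eq, hQh_eq]
    simp only [Fop]
    ring
  have hIsHw : IsHw w (fun x => Fop f x - Fop h x) g'fun := ⟨hg'm, hG2int, hFTC⟩
  refine ⟨g'fun, hIsHw, ?_⟩
  -- norm estimate
  have hInn : ∀ r' : ℝ → ℝ, 0 ≤ ∫ x in Ici (0:ℝ), r' x ^ 2 * w x := fun r' =>
    setIntegral_nonneg measurableSet_Ici fun x hx => mul_nonneg (sq_nonneg _) (wpos hw x hx).le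
  have hIf2 : (∫ x in Ici (0:ℝ), f' x ^ 2 * w x) ≤ Nf ^ 2 := by
    rw [hNfdef, normW, Real.sq_sqrt (add_nonneg (sq_nonneg _) (hInn f'))]
    nlinarith [sq_nonneg (f 0)]
  have hIg2 : (∫ x in Ici (0:ℝ), (f' x - h' x) ^ 2 * w x) ≤ Ng ^ 2 := by
    rw [hNgdef, normW, Real.sq_sqrt (add_nonneg (sq_nonneg _) (hInn (fun x => f' x - h' x)))]
    nlinarith [sq_nonneg (f 0 - h 0)]
  have hIle : (∫ x in Ici (0:ℝ), g'fun x ^ 2 * w x) ≤ ∫ x in Ici (0:ℝ), D x := by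
    refine setIntegral_mono_on hG2int hDint measurableSet_Ici fun x hx => ?_
    have e : g'fun x = inr x := indicator_of_mem hx inr
    rw [e]
    exact hpt x hx
  have hDval : (∫ x in Ici (0:ℝ), D x)
      = 4 * ((Ng * s * C) ^ 2 * (∫ x in Ici (0:ℝ), f' x ^ 2 * w x)
        + (Nf * s * (Ng * s)) ^ 2 * C
        + (Nh * s * C) ^ 2 * (∫ x in Ici (0:ℝ), (f' x - h' x) ^ 2 * w x)
        + (Ng * s * (Nh * s)) ^ 2 * C) := by
    have i1 : IntegrableOn (fun x => (Ng * s * C) ^ 2 * (f' x ^ 2 * w x)) (Ici 0) :=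
      hf.2.1.const_mul _
    have i2 : IntegrableOn (fun x => (Nf * s * (Ng * s)) ^ 2 * w x ^ (-(1/3):ℝ)) (Ici 0) :=
      (hw.2.2.2).const_mul _
    have i3 : IntegrableOn (fun x => (Nh * s * C) ^ 2 * ((f' x - h' x) ^ 2 * w x)) (Ici 0) :=
      hgsq.const_mul _
    have i4 : IntegrableOn (fun x => (Ng * s * (Nh * s)) ^ 2 * w x ^ (-(1/3):ℝ)) (Ici 0) :=
      (hw.2.2.2).const_mul _
    have e1 := integral_add (μ := volume.restrict (Ici (0:ℝ))) ((i1.add i2).add i3) i4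
    simp only [Pi.add_apply] at e1
    have e2 := integral_add (μ := volume.restrict (Ici (0:ℝ))) (i1.add i2) i3
    simp only [Pi.add_apply] at e2
    have e3 := integral_add (μ := volume.restrict (Ici (0:ℝ))) i1 i2
    simp only [hDdef]
    rw [MeasureTheory.integral_const_mul 4, e1, e2, e3,
      MeasureTheory.integral_const_mul, MeasureTheory.integral_const_mul,
      MeasureTheory.integral_const_mul, MeasureTheory.integral_const_mul, ← hCdef]
  have hIbound : (∫ x in Ici (0:ℝ), g'fun x ^ 2 * w x)
      ≤ (3 * (t + 1) * (Nf + Nh) * Ng) ^ 2 := by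
    have l1 : (Ng * s * C) ^ 2 * Nf ^ 2 = t ^ 2 * Ng ^ 2 * Nf ^ 2 := by
      linear_combination Ng ^ 2 * Nf ^ 2 * C ^ 2 * hs2 - Ng ^ 2 * Nf ^ 2 * ht2
    have l2 : (Nf * s * (Ng * s)) ^ 2 * C = t ^ 2 * Nf ^ 2 * Ng ^ 2 := by
      linear_combination Nf ^ 2 * Ng ^ 2 * C * (s ^ 2 + C) * hs2 - Nf ^ 2 * Ng ^ 2 * ht2
    have l3 : (Nh * s * C) ^ 2 * Ng ^ 2 = t ^ 2 * Nh ^ 2 * Ng ^ 2 := by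
      linear_combination Nh ^ 2 * Ng ^ 2 * C ^ 2 * hs2 - Nh ^ 2 * Ng ^ 2 * ht2
    have l4 : (Ng * s * (Nh * s)) ^ 2 * C = t ^ 2 * Ng ^ 2 * Nh ^ 2 := by
      linear_combination Ng ^ 2 * Nh ^ 2 * C * (s ^ 2 + C) * hs2 - Ng ^ 2 * Nh ^ 2 * ht2
    have m1 : (Ng * s * C) ^ 2 * (∫ x in Ici (0:ℝ), f' x ^ 2 * w x) ≤ (Ng * s * C) ^ 2 * Nf ^ 2 :=
      mul_le_mul_of_nonneg_left hIf2 (sq_nonneg _)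
    have m3 : (Nh * s * C) ^ 2 * (∫ x in Ici (0:ℝ), (f' x - h' x) ^ 2 * w x)
        ≤ (Nh * s * C) ^ 2 * Ng ^ 2 :=
      mul_le_mul_of_nonneg_left hIg2 (sq_nonneg _)
    have q1 : Nf ^ 2 + Nh ^ 2 ≤ (Nf + Nh) ^ 2 := by nlinarith [mul_nonneg hNf0 hNh0]
    have q2 : 8 * t ^ 2 ≤ (3 * (t + 1)) ^ 2 := by nlinarith [sq_nonneg t]
    have final : 4 * (t ^ 2 * Ng ^ 2 * Nf ^ 2 + t ^ 2 * Nf ^ 2 * Ng ^ 2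
        + t ^ 2 * Nh ^ 2 * Ng ^ 2 + t ^ 2 * Ng ^ 2 * Nh ^ 2)
        ≤ (3 * (t + 1) * (Nf + Nh) * Ng) ^ 2 := by
      nlinarith [mul_nonneg (mul_nonneg (sq_nonneg t) (sq_nonneg Ng))
          (mul_nonneg hNf0 hNh0),
        mul_le_mul_of_nonneg_left q1 (mul_nonneg (sq_nonneg t) (sq_nonneg Ng)),
        mul_le_mul_of_nonneg_right q2
          (mul_nonneg (sq_nonneg (Nf + Nh)) (sq_nonneg Ng))]
    calc (∫ x in Ici (0:ℝ), g'fun x ^ 2 * w x) ≤ ∫ x in Ici (0:ℝ), D x := hIle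
      _ = 4 * ((Ng * s * C) ^ 2 * (∫ x in Ici (0:ℝ), f' x ^ 2 * w x)
          + (Nf * s * (Ng * s)) ^ 2 * C
          + (Nh * s * C) ^ 2 * (∫ x in Ici (0:ℝ), (f' x - h' x) ^ 2 * w x)
          + (Ng * s * (Nh * s)) ^ 2 * C) := hDval
      _ ≤ 4 * ((Ng * s * C) ^ 2 * Nf ^ 2 + (Nf * s * (Ng * s)) ^ 2 * C
          + (Nh * s * C) ^ 2 * Ng ^ 2 + (Ng * s * (Nh * s)) ^ 2 * C) := by linarith
      _ = 4 * (t ^ 2 * Ng ^ 2 * Nf ^ 2 + t ^ 2 * Nf ^ 2 * Ng ^ 2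
          + t ^ 2 * Nh ^ 2 * Ng ^ 2 + t ^ 2 * Ng ^ 2 * Nh ^ 2) := by
          rw [l1, l2, l3, l4]
      _ ≤ _ := final
  have hRHS0 : 0 ≤ 3 * (t + 1) * (Nf + Nh) * Ng := by positivity
  have hnorm : normW w (fun x => Fop f x - Fop h x) g'fun
      = Real.sqrt (∫ x in Ici (0:ℝ), g'fun x ^ 2 * w x) := by
    rw [normW, hFop0]
    norm_num
  rw [hnorm]
  calc Real.sqrt (∫ x in Ici (0:ℝ), g'fun x ^ 2 * w x)
      ≤ Real.sqrt ((3 * (t + 1) * (Nf + Nh) * Ng) ^ 2) := Real.sqrt_le_sqrt hIbound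
    _ = 3 * (t + 1) * (Nf + Nh) * Ng := Real.sqrt_sq hRHS0
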